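/- arXiv:2007.07491 — 2 statements merged into one kernel-verified Lean document; each statement's English description precedes it below -/
import Mathlib

section
/- Let X₁ and X₂ be metric spaces and M = X₁ × X₂ with the ℓ²-product metric, and let p_i : M → X_i be the projections. For any Lipschitz function f : X_i → ℝ, the local Lipschitz constant of f ∘ p_i at a point (x₁, x₂) ∈ M equals the local Lipschitz constant of f at x_i. -/
open Filter

/-- The local Lipschitz constant `limsup_{z→y} |g(y)-g(z)|/d(y,z)` of `g` at `y`, computed
with respect to a distance function `d` (it is `0` at isolated points). -/
noncomputable def locLip {Y : Type*} [TopologicalSpace Y] (d : Y → Y → ℝ) (g : Y → ℝ)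
    (y : Y) : ENNReal :=
  Filter.limsup (fun z => ENNReal.ofReal (|g y - g z| / d y z)) (nhdsWithin y {y}ᶜ)

/-- The `ℓ²`-product distance on `X₁ × X₂`. -/
noncomputable def prodDist₂ {X₁ X₂ : Type*} [MetricSpace X₁] [MetricSpace X₂]
    (a b : X₁ × X₂) : ℝ :=
  Real.sqrt (dist a.1 b.1 ^ 2 + dist a.2 b.2 ^ 2)

/-!
Along the projection the product distance dominates the distance of the factor, so every
difference quotient of `f ∘ p_i` is bounded by the corresponding one of `f`. Conversely the
slice `z ↦ (z, x₂)` (resp. `z ↦ (x₁, z)`) is isometric at the base point and continuous, so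
the difference quotients of `f` reappear along it.
-/

open Topology

section LocLip

variable {X Y : Type*} [TopologicalSpace Y] (D : Y → Y → ℝ) (g : X → ℝ)

lemma locLip_comp_le [MetricSpace X] {π : Y → X} {y : Y} (hπ : ContinuousAt π y)
    (hD : ∀ z, dist (π y) (π z) ≤ D y z) :
    locLip D (g ∘ π) y ≤ locLip dist g (π y) := by
  set v : X → ENNReal := fun z => ENNReal.ofReal (|g (π y) - g z| / dist (π y) z)
  have hpointwise : ∀ z, ENNReal.ofReal (|g (π y) - g (π z)| / D y z) ≤ v (π z) := by
    intro z
    rcases eq_or_ne (π z) (π y) with hz | hz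
    · simp [hz]
    · exact ENNReal.ofReal_le_ofReal <|
        div_le_div_of_nonneg_left (abs_nonneg _) (dist_pos.2 hz.symm) (hD z)
  -- `v (π y) = 0` since `0 / 0 = 0`, so passing from `𝓝[≠] (π y)` to `𝓝 (π y)` costs nothing.
  have hcenter : limsup v (pure (π y)) = 0 :=
    nonpos_iff_eq_zero.1 <| limsup_le_of_le (by isBoundedDefault) (eventually_pure.2 (by simp [v]))
  calc locLip D (g ∘ π) y ≤ limsup (v ∘ π) (𝓝[≠] y) :=
        limsup_le_limsup (Eventually.of_forall hpointwise)
    _ = limsup v (map π (𝓝[≠] y)) := limsup_comp v π _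
    _ ≤ limsup v (𝓝 (π y)) := limsup_le_limsup_of_le (hπ.mono_left nhdsWithin_le_nhds)
    _ = locLip dist g (π y) := by
        rw [← nhdsNE_sup_pure, limsup_sup_filter, hcenter, max_zero]
        rfl

lemma locLip_le_locLip_comp [TopologicalSpace X] (d : X → X → ℝ) {π : Y → X} {σ : X → Y}
    {x : X} (hσ : ContinuousAt σ x) (hπσ : Function.LeftInverse π σ)
    (hD : ∀ z, D (σ x) (σ z) = d x z) :
    locLip d g x ≤ locLip D (g ∘ π) (σ x) := by
  have hσ_punctured : Tendsto σ (𝓝[≠] x) (𝓝[≠] (σ x)) :=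
    tendsto_nhdsWithin_of_tendsto_nhds_of_eventually_within _ (hσ.mono_left nhdsWithin_le_nhds)
      (eventually_nhdsWithin_of_forall fun z hz => hπσ.injective.ne hz)
  calc locLip d g x
      = limsup ((fun z => ENNReal.ofReal (|g (π (σ x)) - g (π z)| / D (σ x) z)) ∘ σ)
          (𝓝[≠] x) := by
        simp only [locLip, Function.comp_def, hπσ _, hD]
    _ ≤ locLip D (g ∘ π) (σ x) := by
        rw [limsup_comp]
        exact limsup_le_limsup_of_le hσ_punctured

end LocLip

section ProdDist

variable {X₁ X₂ : Type*} [MetricSpace X₁] [MetricSpace X₂]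

lemma dist_fst_le_prodDist₂ (a b : X₁ × X₂) : dist a.1 b.1 ≤ prodDist₂ a b :=
  Real.le_sqrt_of_sq_le (le_add_of_nonneg_right (sq_nonneg _))

lemma dist_snd_le_prodDist₂ (a b : X₁ × X₂) : dist a.2 b.2 ≤ prodDist₂ a b :=
  Real.le_sqrt_of_sq_le (le_add_of_nonneg_left (sq_nonneg _))

lemma prodDist₂_mk_right (x₁ z₁ : X₁) (x₂ : X₂) :
    prodDist₂ (x₁, x₂) (z₁, x₂) = dist x₁ z₁ := by
  simp [prodDist₂, Real.sqrt_sq dist_nonneg]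

lemma prodDist₂_mk_left (x₁ : X₁) (x₂ z₂ : X₂) :
    prodDist₂ (x₁, x₂) (x₁, z₂) = dist x₂ z₂ := by
  simp [prodDist₂, Real.sqrt_sq dist_nonneg]

end ProdDist

theorem stmt_10_general (X₁ X₂ : Type*) [MetricSpace X₁] [MetricSpace X₂]
    (f : X₁ → ℝ) (g : X₂ → ℝ) (x : X₁ × X₂) :
    locLip prodDist₂ (f ∘ Prod.fst) x = locLip dist f x.1 ∧
    locLip prodDist₂ (g ∘ Prod.snd) x = locLip dist g x.2 := by
  obtain ⟨x₁, x₂⟩ := x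
  refine ⟨le_antisymm ?_ ?_, le_antisymm ?_ ?_⟩
  · exact locLip_comp_le _ f continuous_fst.continuousAt (dist_fst_le_prodDist₂ _)
  · exact locLip_le_locLip_comp _ f dist (σ := fun z => (z, x₂)) (by fun_prop) (fun _ => rfl)
      (prodDist₂_mk_right x₁ · x₂)
  · exact locLip_comp_le _ g continuous_snd.continuousAt (dist_snd_le_prodDist₂ _)
  · exact locLip_le_locLip_comp _ g dist (σ := fun z => (x₁, z)) (by fun_prop) (fun _ => rfl)
      (prodDist₂_mk_left x₁ x₂)

/-- For a Lipschitz function `f` on a factor `X_i`, the local Lipschitz constant of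
`f ∘ p_i` on the `ℓ²`-product `M = X₁ × X₂` at `(x₁, x₂)` equals the local Lipschitz
constant of `f` at `x_i`. -/
theorem stmt_10 (X₁ X₂ : Type*) [MetricSpace X₁] [MetricSpace X₂]
    (f : X₁ → ℝ) (g : X₂ → ℝ) (K₁ K₂ : NNReal)
    (hf : LipschitzWith K₁ f) (hg : LipschitzWith K₂ g) (x : X₁ × X₂) :
    locLip prodDist₂ (f ∘ Prod.fst) x = locLip dist f x.1 ∧
    locLip prodDist₂ (g ∘ Prod.snd) x = locLip dist g x.2 :=
  stmt_10_general X₁ X₂ f g x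
end

section
/- Let (X₁, 𝔪₁) and (X₂, 𝔪₂) be compact metric probability measure spaces, M = X₁ × X₂ with product metric and product measure, and let f_n : M → ℝ be Lipschitz functions with ‖f_n − f ∘ p₁‖²_{L²(M)} = ε_n → 0 for a function f ∈ L²(X₁), where p₁ is the projection. Assume ε_n < 1. Then for each n there exists x₂(n) ∈ X₂ such that ∫_{X₁} (f_n(·, x₂(n)) − f)² d𝔪₁ ≤ 2 ε_n^{1/2} and ∫_{X₁} (Lip_{X₁}(f_n(·, x₂(n))))² d𝔪₁ ≤ (1 + ε_n^{1/2}) ∫_M (Lip_M f_n)² d𝔪. -/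
open Filter MeasureTheory

open scoped Topology ENNReal

/-!
By Tonelli, the slice defect `F x₂ = ∫ (f_n(·, x₂) − f)² d𝔪₁` has mean `ε_n` and the slice
energy `G x₂ = ∫ (Lip_M f_n)²(·, x₂) d𝔪₁` has mean `∫_M (Lip_M f_n)²`, and the local Lipschitz
constant of a slice is at most that of `f_n`. By Markov, `F ≤ 2√ε_n` on a set of measure at least
`1 − √ε_n / 2 > 0`, and somewhere on this set `G` is at most its average there, which is at most
`(1 − √ε_n / 2)⁻¹ ∫_M (Lip_M f_n)² ≤ (1 + √ε_n) ∫_M (Lip_M f_n)²`.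

Tonelli needs `Lip_M f_n` to be measurable: for continuous `f_n` it is a countable infimum of
suprema of difference quotients over a countable dense set.
-/

section Selection

variable {Ω : Type*} [MeasurableSpace Ω] {μ : Measure Ω}

-- For `c = 0` the right side is `0 / 0 = 0` exactly when `∫⁻ f = 0`, so no case split on `ε = 0`
-- is needed below.
lemma meas_gt_le_lintegral_div {f : Ω → ℝ≥0∞} (hf : AEMeasurable f μ) {c : ℝ≥0∞}
    (hc : c ≠ ∞) : μ {x | c < f x} ≤ (∫⁻ x, f x ∂μ) / c := by
  rcases eq_or_ne c 0 with rfl | hc0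
  · rcases eq_or_ne (∫⁻ x, f x ∂μ) 0 with hI | hI
    · have hf0 : f =ᵐ[μ] 0 := (lintegral_eq_zero_iff' hf).1 hI
      have hnull : μ {x | 0 < f x} = 0 :=
        measure_mono_null (fun x hx => (ne_of_lt hx).symm) (ae_iff.1 hf0)
      simp [hnull]
    · simp [ENNReal.div_zero hI]
  · exact (measure_mono fun x (hx : c < f x) => hx.le).trans
      (meas_ge_le_lintegral_div hf hc0 hc)

lemma exists_mem_le_lintegral_div {f : Ω → ℝ≥0∞} (hf : AEMeasurable f μ) {s : Set Ω}
    (hs₀ : μ s ≠ 0) (hs : μ s ≠ ∞) : ∃ x ∈ s, f x ≤ (∫⁻ x, f x ∂μ) / μ s := by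
  obtain ⟨x, hxs, hx⟩ := exists_le_setLAverage hs₀ hs hf.restrict
  refine ⟨x, hxs, hx.trans ?_⟩
  rw [setLAverage_eq]
  gcongr
  exact Measure.restrict_le_self

lemma exists_le_two_sqrt_and_le_one_add_sqrt_mul [IsProbabilityMeasure μ] {F G : Ω → ℝ≥0∞}
    (hF : AEMeasurable F μ) (hG : AEMeasurable G μ) {ε : ℝ} (hε0 : 0 ≤ ε) (hε1 : ε < 1)
    (hFint : ∫⁻ x, F x ∂μ ≤ ENNReal.ofReal ε) :
    ∃ x, F x ≤ ENNReal.ofReal (2 * √ε) ∧ G x ≤ ENNReal.ofReal (1 + √ε) * ∫⁻ x, G x ∂μ := by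
  set r := √ε
  have hr0 : 0 ≤ r := Real.sqrt_nonneg ε
  have hr1 : r < 1 := (Real.sqrt_lt' one_pos).2 (by simpa using hε1)
  set good := {x | F x ≤ ENNReal.ofReal (2 * r)}
  have hbad : μ goodᶜ ≤ ENNReal.ofReal (r / 2) := by
    calc μ goodᶜ = μ {x | ENNReal.ofReal (2 * r) < F x} := by
          simp only [good, Set.compl_ofPred, not_le]
      _ ≤ (∫⁻ x, F x ∂μ) / ENNReal.ofReal (2 * r) :=
        meas_gt_le_lintegral_div hF ENNReal.ofReal_ne_top
      _ ≤ ENNReal.ofReal (r / 2) := by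
        refine ENNReal.div_le_of_le_mul (hFint.trans_eq ?_)
        rw [← ENNReal.ofReal_mul (by positivity)]
        congr 1
        have hr_sq : r ^ 2 = ε := Real.sq_sqrt hε0
        nlinarith
  have hgood : ENNReal.ofReal (1 - r / 2) ≤ μ good := by
    have hcover : (1 : ℝ≥0∞) ≤ μ good + μ goodᶜ := by
      simpa using measure_univ_le_add_compl (μ := μ) good
    rw [ENNReal.ofReal_sub _ (by positivity), ENNReal.ofReal_one, tsub_le_iff_right]
    exact hcover.trans (by gcongr)
  have hgood0 : μ good ≠ 0 := ((ENNReal.ofReal_pos.2 (by linarith)).trans_le hgood).ne'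
  obtain ⟨x, hxF, hxG⟩ := exists_mem_le_lintegral_div hG hgood0 (measure_ne_top μ good)
  refine ⟨x, hxF, hxG.trans ?_⟩
  calc (∫⁻ x, G x ∂μ) / μ good ≤ (∫⁻ x, G x ∂μ) / ENNReal.ofReal (1 - r / 2) := by gcongr
    _ = ENNReal.ofReal (1 - r / 2)⁻¹ * ∫⁻ x, G x ∂μ := by
      rw [div_eq_mul_inv, mul_comm, ENNReal.ofReal_inv_of_pos (by linarith)]
    _ ≤ ENNReal.ofReal (1 + r) * ∫⁻ x, G x ∂μ := by
      gcongr
      rw [inv_le_iff_one_le_mul₀ (by linarith)]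
      nlinarith

end Selection

lemma ContinuousOn.biSup_inter_dense {X α : Type*} [TopologicalSpace X] [CompleteLattice α]
    [TopologicalSpace α] [ClosedIicTopology α] {φ : X → α} {U D : Set X}
    (hφ : ContinuousOn φ U) (hU : IsOpen U) (hD : Dense D) :
    ⨆ z ∈ U ∩ D, φ z = ⨆ z ∈ U, φ z := by
  refine le_antisymm (biSup_mono fun _ h => h.1) (iSup₂_le fun z hz => ?_)
  have hφz : φ z ∈ closure (φ '' (U ∩ D)) :=
    ((hφ z hz).mono Set.inter_subset_left).mem_closure_image
      (hD.open_subset_closure_inter hU hz)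
  have hsub : φ '' (U ∩ D) ⊆ Set.Iic (⨆ w ∈ U ∩ D, φ w) :=
    Set.image_subset_iff.2 fun w hw => le_iSup₂ (f := fun w _ => φ w) w hw
  exact closure_minimal hsub isClosed_Iic hφz

lemma continuous_of_abs_sub_le_mul {Y : Type*} [TopologicalSpace Y] {d : Y → Y → ℝ}
    (hd : Continuous (Function.uncurry d)) (hdiag : ∀ a, d a a = 0) {g : Y → ℝ} {K : ℝ}
    (hK : ∀ a b, |g a - g b| ≤ K * d a b) : Continuous g := by
  refine continuous_iff_continuousAt.2 fun a => ?_
  have hKd_cont : Continuous fun b => K * d a b := continuous_const.mul (hd.uncurry_left a)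
  have hKd : Tendsto (fun b => K * d a b) (𝓝 a) (𝓝 0) := by
    simpa [hdiag] using hKd_cont.tendsto a
  rw [ContinuousAt, tendsto_iff_dist_tendsto_zero]
  exact squeeze_zero (fun _ => dist_nonneg)
    (fun b => by rw [Real.dist_eq, abs_sub_comm]; exact hK a b) hKd

section Measurability

variable {Y : Type*} [MetricSpace Y] {d : Y → Y → ℝ}

lemma hasBasis_nhdsNE_of_dist_le (hd : Continuous (Function.uncurry d))
    (hdist : ∀ a b, dist a b ≤ d a b) (hdiag : ∀ a, d a a = 0) (y : Y) :
    (𝓝[≠] y).HasBasis (fun _ : ℕ => True) fun k => {z | d y z < 1 / (k + 1)} ∩ {y}ᶜ := by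
  refine (Metric.nhds_basis_ball_inv_nat_succ.to_hasBasis'
    (fun k _ => ⟨k, trivial, fun z hz => ?_⟩) fun k _ => ?_).inf_principal {y}ᶜ
  · rw [Metric.mem_ball, dist_comm]
    exact (hdist y z).trans_lt hz
  · refine (isOpen_lt (hd.uncurry_left y) continuous_const).mem_nhds ?_
    simp only [Set.mem_ofPred_eq, hdiag]
    positivity

lemma locLip_eq_iInf_iSup_indicator (hd : Continuous (Function.uncurry d))
    (hdist : ∀ a b, dist a b ≤ d a b) (hdiag : ∀ a, d a a = 0) {g : Y → ℝ} (hg : Continuous g)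
    {D : Set Y} (hD : Dense D) (y : Y) :
    locLip d g y = ⨅ k : ℕ, ⨆ z ∈ D, ({w | d w z < 1 / (k + 1)} ∩ {z}ᶜ).indicator
      (fun w => ENNReal.ofReal (|g w - g z| / d w z)) y := by
  rw [locLip, (hasBasis_nhdsNE_of_dist_le hd hdist hdiag y).limsup_eq_iInf_iSup]
  simp only [iInf_true]
  refine iInf_congr fun k => ?_
  have hquot : ContinuousOn (fun z => ENNReal.ofReal (|g y - g z| / d y z)) {y}ᶜ :=
    ENNReal.continuous_ofReal.comp_continuousOn <|
      ((continuous_const.sub hg).abs.continuousOn).div (hd.uncurry_left y).continuousOn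
        fun z hz => ((dist_pos.2 (Ne.symm hz)).trans_le (hdist y z)).ne'
  rw [← (hquot.mono Set.inter_subset_right).biSup_inter_dense
    ((isOpen_lt (hd.uncurry_left y) continuous_const).inter isOpen_compl_singleton) hD]
  refine iSup_congr fun z => ?_
  by_cases hz : z ∈ D
  · simp only [Set.indicator]
    split_ifs with hy <;> simp_all [eq_comm]
  · simp [hz]

lemma measurable_locLip [SecondCountableTopology Y] [MeasurableSpace Y] [BorelSpace Y]
    (hd : Continuous (Function.uncurry d)) (hdist : ∀ a b, dist a b ≤ d a b)
    (hdiag : ∀ a, d a a = 0) {g : Y → ℝ} (hg : Continuous g) : Measurable (locLip d g) := by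
  obtain ⟨D, hDc, hD⟩ := TopologicalSpace.exists_countable_dense Y
  rw [funext (locLip_eq_iInf_iSup_indicator hd hdist hdiag hg hD)]
  refine Measurable.iInf fun k => Measurable.biSup _ hDc fun z _ => Measurable.indicator ?_ ?_
  · exact ((hg.sub continuous_const).abs.measurable.div
      (hd.uncurry_right z).measurable).ennreal_ofReal
  · exact (isOpen_lt (hd.uncurry_right z) continuous_const).measurableSet.inter
      (measurableSet_singleton z).compl

end Measurability

section ProdDist

variable {X₁ X₂ : Type*} [MetricSpace X₁] [MetricSpace X₂]

lemma continuous_prodDist₂ :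
    Continuous (Function.uncurry (prodDist₂ (X₁ := X₁) (X₂ := X₂))) := by
  unfold prodDist₂ Function.uncurry
  fun_prop

lemma dist_le_prodDist₂ (a b : X₁ × X₂) : dist a b ≤ prodDist₂ a b := by
  rw [Prod.dist_eq]
  refine max_le (Real.le_sqrt_of_sq_le ?_) (Real.le_sqrt_of_sq_le ?_) <;>
    nlinarith [sq_nonneg (dist a.1 b.1), sq_nonneg (dist a.2 b.2)]

@[simp]
lemma prodDist₂_self (a : X₁ × X₂) : prodDist₂ a a = 0 := by
  simp [prodDist₂]

@[simp]
lemma prodDist₂_mk_mk_same_snd (x₁ y₁ : X₁) (x₂ : X₂) :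
    prodDist₂ (x₁, x₂) (y₁, x₂) = dist x₁ y₁ := by
  simp [prodDist₂, Real.sqrt_sq dist_nonneg]

lemma locLip_slice_le (g : X₁ × X₂ → ℝ) (x₁ : X₁) (x₂ : X₂) :
    locLip dist (fun y₁ => g (y₁, x₂)) x₁ ≤ locLip prodDist₂ g (x₁, x₂) := by
  have hslice : Tendsto (fun y₁ : X₁ => (y₁, x₂)) (𝓝[≠] x₁) (𝓝[≠] (x₁, x₂)) :=
    tendsto_nhdsWithin_of_tendsto_nhds_of_eventually_within _
      ((Continuous.prodMk_left x₂).tendsto x₁ |>.mono_left nhdsWithin_le_nhds)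
      (eventually_nhdsWithin_of_forall fun y₁ hy₁ => by simpa using hy₁)
  refine le_of_eq_of_le ?_ (hslice.limsup_comp_le_limsup
    (u := fun z => ENNReal.ofReal (|g (x₁, x₂) - g z| / prodDist₂ (x₁, x₂) z)))
  simp [locLip, Function.comp_def]

end ProdDist

theorem stmt_11_general (X₁ X₂ : Type*) [MetricSpace X₁] [MetricSpace X₂]
    [CompactSpace X₁] [CompactSpace X₂]
    [MeasurableSpace X₁] [BorelSpace X₁] [MeasurableSpace X₂] [BorelSpace X₂]
    (μ₁ : Measure X₁) (μ₂ : Measure X₂)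
    [IsProbabilityMeasure μ₁] [IsProbabilityMeasure μ₂]
    (f : X₁ → ℝ) (hf : MemLp f 2 μ₁)
    (fn : ℕ → X₁ × X₂ → ℝ)
    (hlip : ∀ n, ∃ K : ℝ, ∀ a b : X₁ × X₂, |fn n a - fn n b| ≤ K * prodDist₂ a b)
    (ε : ℕ → ℝ) (hε0 : ∀ n, 0 ≤ ε n) (hε1 : ∀ n, ε n < 1)
    (hεdef : ∀ n, ∫⁻ z, ENNReal.ofReal ((fn n z - f z.1) ^ 2) ∂(μ₁.prod μ₂) =
      ENNReal.ofReal (ε n)) :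
    ∀ n, ∃ x₂ : X₂,
      (∫⁻ x₁, ENNReal.ofReal ((fn n (x₁, x₂) - f x₁) ^ 2) ∂μ₁ ≤
        ENNReal.ofReal (2 * Real.sqrt (ε n))) ∧
      (∫⁻ x₁, (locLip dist (fun y₁ => fn n (y₁, x₂)) x₁) ^ 2 ∂μ₁ ≤
        ENNReal.ofReal (1 + Real.sqrt (ε n)) *
          ∫⁻ z, (locLip prodDist₂ (fn n) z) ^ 2 ∂(μ₁.prod μ₂)) := by
  intro n
  obtain ⟨K, hK⟩ := hlip n
  have hcont : Continuous (fn n) :=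
    continuous_of_abs_sub_le_mul continuous_prodDist₂ prodDist₂_self hK
  have hdefect : AEMeasurable (fun z : X₁ × X₂ => ENNReal.ofReal ((fn n z - f z.1) ^ 2))
      (μ₁.prod μ₂) :=
    ((hcont.measurable.aemeasurable.sub
      hf.aestronglyMeasurable.aemeasurable.comp_fst).pow_const 2).ennreal_ofReal
  have henergy : AEMeasurable (fun z => locLip prodDist₂ (fn n) z ^ 2) (μ₁.prod μ₂) :=
    ((measurable_locLip (Y := X₁ × X₂) continuous_prodDist₂ dist_le_prodDist₂ prodDist₂_self
      hcont).pow_const 2).aemeasurable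
  obtain ⟨x₂, hdefect_x₂, henergy_x₂⟩ := exists_le_two_sqrt_and_le_one_add_sqrt_mul
    (AEMeasurable.lintegral_prod_left' hdefect)
    (AEMeasurable.lintegral_prod_left' henergy) (hε0 n) (hε1 n)
    (by rw [← lintegral_prod_symm _ hdefect, hεdef])
  refine ⟨x₂, hdefect_x₂, (lintegral_mono fun x₁ => ?_).trans (henergy_x₂.trans_eq ?_)⟩
  · gcongr
    exact locLip_slice_le _ _ _
  · rw [lintegral_prod_symm _ henergy]

/-- Good-slice selection: if `f_n` are Lipschitz on the `ℓ²`-product `M = X₁ × X₂` of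
compact metric probability spaces and `‖f_n − f ∘ p₁‖²_{L²(M)} = ε_n → 0` with `ε_n < 1`,
then for each `n` there is a point `x₂(n) ∈ X₂` whose slice simultaneously satisfies the
`L²`-closeness bound `∫ (f_n(·,x₂(n)) − f)² ≤ 2√ε_n` and the energy bound
`∫ Lip(f_n(·,x₂(n)))² ≤ (1+√ε_n) ∫_M (Lip f_n)²`. -/
theorem stmt_11 (X₁ X₂ : Type*) [MetricSpace X₁] [MetricSpace X₂]
    [CompactSpace X₁] [CompactSpace X₂]
    [MeasurableSpace X₁] [BorelSpace X₁] [MeasurableSpace X₂] [BorelSpace X₂]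
    (μ₁ : Measure X₁) (μ₂ : Measure X₂)
    [IsProbabilityMeasure μ₁] [IsProbabilityMeasure μ₂]
    (f : X₁ → ℝ) (hf : MemLp f 2 μ₁)
    (fn : ℕ → X₁ × X₂ → ℝ)
    (hlip : ∀ n, ∃ K : ℝ, ∀ a b : X₁ × X₂, |fn n a - fn n b| ≤ K * prodDist₂ a b)
    (ε : ℕ → ℝ) (hε0 : ∀ n, 0 ≤ ε n) (hε1 : ∀ n, ε n < 1)
    (hεlim : Tendsto ε atTop (nhds 0))
    (hεdef : ∀ n, ∫⁻ z, ENNReal.ofReal ((fn n z - f z.1) ^ 2) ∂(μ₁.prod μ₂) =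
      ENNReal.ofReal (ε n)) :
    ∀ n, ∃ x₂ : X₂,
      (∫⁻ x₁, ENNReal.ofReal ((fn n (x₁, x₂) - f x₁) ^ 2) ∂μ₁ ≤
        ENNReal.ofReal (2 * Real.sqrt (ε n))) ∧
      (∫⁻ x₁, (locLip dist (fun y₁ => fn n (y₁, x₂)) x₁) ^ 2 ∂μ₁ ≤
        ENNReal.ofReal (1 + Real.sqrt (ε n)) *
          ∫⁻ z, (locLip prodDist₂ (fn n) z) ^ 2 ∂(μ₁.prod μ₂)) :=
  stmt_11_general X₁ X₂ μ₁ μ₂ f hf fn hlip ε hε0 hε1 hεdef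
end
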